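/- Let h, l : ℝ × {−ω₀, ω₀} → ℝ be 2π-periodic and smooth in θ, odd (h(−θ, −ω) = −h(θ, ω) and likewise for l), with ∫₀^{2π} h(θ, ω) dθ = ∫₀^{2π} l(θ, ω) dθ = 0 for each ω. Then the Dirichlet form of L decomposes as ⟨Lh, l⟩_{μ,−1,q} = Γ(h, l) + K·ℓ(h)·ℓ(l), where Γ(h, l) = −(1/2)·(1/2)·Σ_{ω}∫₀^{2π} h(θ,ω)·l(θ,ω)/q(θ,ω) dθ + (1/2)·Σ_{ω}∫₀^{2π} κ(ω)·h(θ,ω)·𝓛(θ,ω)/q(θ,ω)² dθ, ℓ(a) = (1/2)·Σ_{ω}∫₀^{2π} a(θ, ω)·sin(θ) dθ, κ(ω) = (1 − exp(4πω))/(2·Z(ω, 2Kr)), and 𝓛(·, ω) is the 2π-periodic primitive of l(·, ω) normalized by ∫₀^{2π} 𝓛(θ, ω)/q(θ, ω) dθ = 0. -/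

import Mathlib

noncomputable section

open MeasureTheory

/-- `G u ω x = x·cos u + 2ωu`. -/
def G (u ω x : ℝ) : ℝ := x * Real.cos u + 2 * ω * u

/-- The unnormalized stationary profile `S(θ, ω, x)`. -/
def S (θ ω x : ℝ) : ℝ :=
  Real.exp (G θ ω x) *
    ((1 - Real.exp (4 * Real.pi * ω)) * (∫ u in (0:ℝ)..θ, Real.exp (-(G u ω x))) +
      Real.exp (4 * Real.pi * ω) * (∫ u in (0:ℝ)..(2 * Real.pi), Real.exp (-(G u ω x))))

/-- The normalization constant `Z(ω, x)`. -/
def Z (ω x : ℝ) : ℝ := ∫ θ in (0:ℝ)..(2 * Real.pi), S θ ω x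

/-- `Ψ_μ` for the binary disorder law `μ = (1/2)(δ_{-ω₀} + δ_{ω₀})`. -/
def psiMu (ω₀ x : ℝ) : ℝ :=
  (1 / 2) * ((∫ θ in (0:ℝ)..(2 * Real.pi), Real.cos θ * S θ (-ω₀) x) / Z (-ω₀) x +
    (∫ θ in (0:ℝ)..(2 * Real.pi), Real.cos θ * S θ ω₀ x) / Z ω₀ x)

/-- The stationary density `q(θ, ω) = S(θ, ω, 2Kr)/Z(ω, 2Kr)`. -/
def q (K r θ ω : ℝ) : ℝ := S θ ω (2 * K * r) / Z ω (2 * K * r)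

/-- `κ(ω) = (1 − exp(4πω))/(2 Z(ω, 2Kr))`. -/
def kap (K r ω : ℝ) : ℝ := (1 - Real.exp (4 * Real.pi * ω)) / (2 * Z ω (2 * K * r))

/-- The averaged convolution `⟨J∗h⟩_μ(θ)` for binary disorder. -/
def Jconv (K ω₀ : ℝ) (h : ℝ → ℝ → ℝ) (θ : ℝ) : ℝ :=
  -(K / 2) * ((∫ φ in (0:ℝ)..(2 * Real.pi), Real.sin φ * h (θ - φ) (-ω₀)) +
    (∫ φ in (0:ℝ)..(2 * Real.pi), Real.sin φ * h (θ - φ) ω₀))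

/-- The linearized evolution operator `L` around the stationary density `q`. -/
def Lop (K ω₀ r : ℝ) (h : ℝ → ℝ → ℝ) (θ ω : ℝ) : ℝ :=
  (1 / 2) * deriv (deriv (fun u => h u ω)) θ -
    deriv (fun u => h u ω * (Jconv K ω₀ (q K r) u + ω) + q K r u ω * Jconv K ω₀ h u) θ

/-- The `2π`-periodic primitive of a zero-mean function `a`, normalized so that its
integral against `1/k` over a period vanishes. -/
def prim (k a : ℝ → ℝ) (θ : ℝ) : ℝ :=
  (∫ u in (0:ℝ)..θ, a u) -
    (∫ s in (0:ℝ)..(2 * Real.pi), (∫ u in (0:ℝ)..s, a u) / k s) /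
      (∫ s in (0:ℝ)..(2 * Real.pi), 1 / k s)

/-- The weighted Sobolev pairing for zero-mean functions (binary disorder). -/
def pairMu (K r ω₀ : ℝ) (a b : ℝ → ℝ → ℝ) : ℝ :=
  (1 / 2) *
    ((∫ θ in (0:ℝ)..(2 * Real.pi),
        prim (fun u => q K r u (-ω₀)) (fun u => a u (-ω₀)) θ *
          prim (fun u => q K r u (-ω₀)) (fun u => b u (-ω₀)) θ / q K r θ (-ω₀)) +
      (∫ θ in (0:ℝ)..(2 * Real.pi),
        prim (fun u => q K r u ω₀) (fun u => a u ω₀) θ *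
          prim (fun u => q K r u ω₀) (fun u => b u ω₀) θ / q K r θ ω₀))

/-- The bilinear form appearing in the decomposition of the Dirichlet form. -/
def Gam (K r ω₀ : ℝ) (h l : ℝ → ℝ → ℝ) : ℝ :=
  -(1 / 2) * ((1 / 2) *
      ((∫ θ in (0:ℝ)..(2 * Real.pi), h θ (-ω₀) * l θ (-ω₀) / q K r θ (-ω₀)) +
        (∫ θ in (0:ℝ)..(2 * Real.pi), h θ ω₀ * l θ ω₀ / q K r θ ω₀))) +
    (1 / 2) *
      ((∫ θ in (0:ℝ)..(2 * Real.pi),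
          kap K r (-ω₀) * h θ (-ω₀) *
            prim (fun u => q K r u (-ω₀)) (fun u => l u (-ω₀)) θ / (q K r θ (-ω₀)) ^ 2) +
        (∫ θ in (0:ℝ)..(2 * Real.pi),
          kap K r ω₀ * h θ ω₀ *
            prim (fun u => q K r u ω₀) (fun u => l u ω₀) θ / (q K r θ ω₀) ^ 2))

/-- The sine linear form. -/
def ellSin (ω₀ : ℝ) (a : ℝ → ℝ → ℝ) : ℝ :=
  (1 / 2) * ((∫ θ in (0:ℝ)..(2 * Real.pi), a θ (-ω₀) * Real.sin θ) +
    (∫ θ in (0:ℝ)..(2 * Real.pi), a θ ω₀ * Real.sin θ))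

/-!
The fixed-point equation `r = Ψ_μ(2Kr)` together with the symmetry `q(-θ, -ω) = q(θ, ω)` gives
`⟨J∗q⟩_μ = -K r sin`, and oddness of `h` gives `⟨J∗h⟩_μ = K ℓ(h) cos`. Hence for each `ω` the
function `L h` is the derivative of the flux `F = ½ h' - h (ω - K r sin) - K ℓ(h) q cos`, so its
normalized primitive is `F` up to a constant, and the constant drops out because `∫ 𝓛 / q = 0`.
Since `q' = 2 (ω - K r sin) q + 2κ`, one has `F / q = ½ (h / q)' + κ h / q² - K ℓ(h) cos`, and
two periodic integrations by parts against `𝓛` produce the three terms of the decomposition.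
-/

open Real Set

theorem integral_comp_neg_of_periodic {E : Type*} [NormedAddCommGroup E] [NormedSpace ℝ E]
    {f : ℝ → E} {T : ℝ} (hf : Function.Periodic f T) :
    ∫ x in (0:ℝ)..T, f (-x) = ∫ x in (0:ℝ)..T, f x := by
  simpa using hf.intervalIntegral_add_eq (-T) 0

theorem integral_mul_deriv_eq_neg_deriv_mul_of_boundary {u v u' v' : ℝ → ℝ} {T : ℝ}
    (hu : ∀ x, HasDerivAt u (u' x) x) (hv : ∀ x, HasDerivAt v (v' x) x)
    (hu' : Continuous u') (hv' : Continuous v') (huT : u T = u 0) (hvT : v T = v 0) :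
    ∫ x in (0:ℝ)..T, u x * v' x = -∫ x in (0:ℝ)..T, u' x * v x := by
  rw [intervalIntegral.integral_mul_deriv_eq_deriv_mul (fun x _ => hu x) (fun x _ => hv x)
    (hu'.intervalIntegrable _ _) (hv'.intervalIntegrable _ _), huT, hvT]
  ring

theorem G_add_two_pi (u ω x : ℝ) : G (u + 2 * π) ω x = G u ω x + 4 * π * ω := by
  unfold G; rw [cos_add_two_pi]; ring

theorem G_neg_neg (u ω x : ℝ) : G (-u) (-ω) x = G u ω x := by
  unfold G; rw [cos_neg]; ring

theorem hasDerivAt_G (u ω x : ℝ) :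
    HasDerivAt (fun t => G t ω x) (-x * sin u + 2 * ω) u := by
  have := ((hasDerivAt_cos u).const_mul x).add ((hasDerivAt_id u).const_mul (2 * ω))
  exact this.congr_deriv (by simp)

theorem continuous_exp_neg_G (ω x : ℝ) : Continuous fun u => exp (-G u ω x) := by
  unfold G; fun_prop

def primExpNegG (ω x θ : ℝ) : ℝ := ∫ u in (0:ℝ)..θ, exp (-G u ω x)

theorem S_eq_primExpNegG (θ ω x : ℝ) :
    S θ ω x = exp (G θ ω x) * ((1 - exp (4 * π * ω)) * primExpNegG ω x θ +
      exp (4 * π * ω) * primExpNegG ω x (2 * π)) := rfl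

theorem hasDerivAt_primExpNegG (ω x θ : ℝ) :
    HasDerivAt (primExpNegG ω x) (exp (-G θ ω x)) θ :=
  ((continuous_exp_neg_G ω x).integral_hasStrictDerivAt 0 θ).hasDerivAt

theorem primExpNegG_nonneg (ω x : ℝ) {θ : ℝ} (hθ : 0 ≤ θ) : 0 ≤ primExpNegG ω x θ :=
  intervalIntegral.integral_nonneg hθ fun _ _ => (exp_pos _).le

theorem primExpNegG_sub_pos (ω x : ℝ) {a b : ℝ} (hab : a < b) :
    0 < primExpNegG ω x b - primExpNegG ω x a := by
  rw [primExpNegG, primExpNegG, intervalIntegral.integral_interval_sub_left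
    ((continuous_exp_neg_G ω x).intervalIntegrable _ _)
    ((continuous_exp_neg_G ω x).intervalIntegrable _ _)]
  exact intervalIntegral.intervalIntegral_pos_of_pos
    ((continuous_exp_neg_G ω x).intervalIntegrable _ _) (fun _ => exp_pos _) hab

theorem primExpNegG_add_two_pi (ω x θ : ℝ) :
    primExpNegG ω x (θ + 2 * π) =
      primExpNegG ω x (2 * π) + exp (-(4 * π * ω)) * primExpNegG ω x θ := by
  have hshift : ∫ u in (2 * π)..(θ + 2 * π), exp (-G u ω x) =
      exp (-(4 * π * ω)) * primExpNegG ω x θ := by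
    have := intervalIntegral.integral_comp_add_right (a := 0) (b := θ)
      (fun u => exp (-G u ω x)) (2 * π)
    rw [zero_add] at this
    rw [primExpNegG, ← intervalIntegral.integral_const_mul, ← this]
    refine intervalIntegral.integral_congr fun u _ => ?_
    simp only [G_add_two_pi, ← exp_add]
    ring_nf
  rw [primExpNegG, primExpNegG, ← hshift, intervalIntegral.integral_add_adjacent_intervals
    ((continuous_exp_neg_G ω x).intervalIntegrable _ _)
    ((continuous_exp_neg_G ω x).intervalIntegrable _ _)]

theorem primExpNegG_neg_neg (ω x θ : ℝ) : primExpNegG (-ω) x (-θ) = -primExpNegG ω x θ := by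
  have := intervalIntegral.integral_comp_neg (a := 0) (b := -θ) fun u => exp (-G u ω x)
  simp only [neg_neg, neg_zero] at this
  rw [primExpNegG, primExpNegG, ← intervalIntegral.integral_symm, ← this]
  refine intervalIntegral.integral_congr fun u _ => ?_
  rw [← G_neg_neg u, neg_neg]

theorem primExpNegG_neg_two_pi (ω x : ℝ) :
    primExpNegG (-ω) x (2 * π) = exp (4 * π * ω) * primExpNegG ω x (2 * π) := by
  have hP0 : primExpNegG ω x 0 = 0 := intervalIntegral.integral_same
  have hperiod := primExpNegG_add_two_pi ω x (-(2 * π))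
  have hreflect := primExpNegG_neg_neg ω x (-(2 * π))
  rw [neg_add_cancel, hP0, exp_neg] at hperiod
  rw [neg_neg] at hreflect
  have hinv : exp (4 * π * ω) * (exp (4 * π * ω))⁻¹ = 1 := mul_inv_cancel₀ (exp_ne_zero _)
  rw [hreflect]
  linear_combination exp (4 * π * ω) * hperiod + primExpNegG ω x (-(2 * π)) * hinv

theorem hasDerivAt_S (θ ω x : ℝ) :
    HasDerivAt (fun t => S t ω x)
      ((-x * sin θ + 2 * ω) * S θ ω x + (1 - exp (4 * π * ω))) θ := by
  have hexp := (hasDerivAt_G θ ω x).exp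
  have hbracket := ((hasDerivAt_primExpNegG ω x θ).const_mul (1 - exp (4 * π * ω))).add_const
    (exp (4 * π * ω) * primExpNegG ω x (2 * π))
  refine (hexp.mul hbracket).congr_deriv ?_
  have hinv : exp (G θ ω x) * exp (-G θ ω x) = 1 := by rw [← exp_add, add_neg_cancel, exp_zero]
  rw [S_eq_primExpNegG]
  linear_combination (1 - exp (4 * π * ω)) * hinv

theorem continuous_S (ω x : ℝ) : Continuous fun θ => S θ ω x :=
  continuous_iff_continuousAt.mpr fun θ => (hasDerivAt_S θ ω x).continuousAt

theorem S_periodic (ω x : ℝ) : Function.Periodic (fun θ => S θ ω x) (2 * π) := by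
  intro θ
  simp only [S_eq_primExpNegG, G_add_two_pi, primExpNegG_add_two_pi, exp_add, exp_neg]
  field_simp
  ring

theorem S_neg_neg (θ ω x : ℝ) : S (-θ) (-ω) x = exp (-(4 * π * ω)) * S θ ω x := by
  rw [S_eq_primExpNegG, S_eq_primExpNegG, G_neg_neg, primExpNegG_neg_neg, primExpNegG_neg_two_pi,
    show 4 * π * -ω = -(4 * π * ω) by ring, exp_neg]
  field_simp
  ring

theorem S_pos (θ ω x : ℝ) : 0 < S θ ω x := by
  obtain ⟨θ', ⟨hθ'0, hθ'2π⟩, hθθ'⟩ := (S_periodic ω x).exists_mem_Ico₀ two_pi_pos θ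
  have hbefore := primExpNegG_nonneg ω x hθ'0
  have hafter := primExpNegG_sub_pos ω x hθ'2π
  rw [hθθ', S_eq_primExpNegG]
  have : 0 < (1 - exp (4 * π * ω)) * primExpNegG ω x θ' +
      exp (4 * π * ω) * primExpNegG ω x (2 * π) := by
    nlinarith [mul_pos (exp_pos (4 * π * ω)) hafter]
  positivity

theorem Z_pos (ω x : ℝ) : 0 < Z ω x :=
  intervalIntegral.intervalIntegral_pos_of_pos ((continuous_S ω x).intervalIntegrable _ _)
    (fun θ => S_pos θ ω x) two_pi_pos

theorem Z_neg (ω x : ℝ) : Z (-ω) x = exp (-(4 * π * ω)) * Z ω x := by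
  rw [Z, ← integral_comp_neg_of_periodic (S_periodic (-ω) x)]
  simp only [S_neg_neg]
  exact intervalIntegral.integral_const_mul _ _

section StationaryDensity

variable (K r : ℝ)

theorem q_periodic (ω : ℝ) : Function.Periodic (fun θ => q K r θ ω) (2 * π) := fun θ => by
  simp only [q, S_periodic ω _ θ]

theorem continuous_q (ω : ℝ) : Continuous fun θ => q K r θ ω :=
  (continuous_S ω _).div_const _

theorem q_pos (θ ω : ℝ) : 0 < q K r θ ω :=
  div_pos (S_pos θ ω _) (Z_pos ω _)

theorem q_neg_neg (θ ω : ℝ) : q K r (-θ) (-ω) = q K r θ ω := by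
  rw [q, q, S_neg_neg, Z_neg, mul_div_mul_left _ _ (exp_ne_zero _)]

theorem hasDerivAt_q (θ ω : ℝ) :
    HasDerivAt (fun t => q K r t ω)
      ((-(2 * K * r) * sin θ + 2 * ω) * q K r θ ω + 2 * kap K r ω) θ := by
  refine ((hasDerivAt_S θ ω (2 * K * r)).div_const (Z ω (2 * K * r))).congr_deriv ?_
  have hZ := (Z_pos ω (2 * K * r)).ne'
  rw [q, kap]
  field_simp

theorem contDiff_q (ω : ℝ) : ContDiff ℝ 1 fun θ => q K r θ ω := by
  have hderiv : deriv (fun θ => q K r θ ω) =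
      fun θ => (-(2 * K * r) * sin θ + 2 * ω) * q K r θ ω + 2 * kap K r ω :=
    funext fun θ => (hasDerivAt_q K r θ ω).deriv
  refine contDiff_one_iff_deriv.mpr ⟨fun θ => (hasDerivAt_q K r θ ω).differentiableAt, ?_⟩
  rw [hderiv]
  have := continuous_q K r ω
  fun_prop

theorem integral_sin_mul_q_neg (ω : ℝ) :
    ∫ u in (0:ℝ)..2 * π, sin u * q K r u (-ω) = -∫ u in (0:ℝ)..2 * π, sin u * q K r u ω := by
  have hsym := integral_comp_neg_of_periodic (f := fun u => sin u * q K r u (-ω))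
    (sin_periodic.mul (q_periodic K r (-ω)))
  simp only [sin_neg, q_neg_neg, neg_mul, intervalIntegral.integral_neg] at hsym
  exact hsym.symm

theorem integral_cos_mul_q_add {ω₀ : ℝ} (hfix : r = psiMu ω₀ (2 * K * r)) :
    (∫ u in (0:ℝ)..2 * π, cos u * q K r u (-ω₀)) + ∫ u in (0:ℝ)..2 * π, cos u * q K r u ω₀ =
      2 * r := by
  simp only [q, ← mul_div_assoc, intervalIntegral.integral_div]
  rw [psiMu] at hfix
  linarith

end StationaryDensity

theorem integral_sin_mul_comp_sub {g : ℝ → ℝ} (hg : Continuous g)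
    (hper : Function.Periodic g (2 * π)) (θ : ℝ) :
    ∫ φ in (0:ℝ)..2 * π, sin φ * g (θ - φ) =
      sin θ * (∫ u in (0:ℝ)..2 * π, cos u * g u) - cos θ * ∫ u in (0:ℝ)..2 * π, sin u * g u := by
  have hshift : Function.Periodic (fun u => sin (θ - u) * g u) (2 * π) := fun u => by
    simp only [show θ - (u + 2 * π) = θ - u - 2 * π by ring, sin_sub_two_pi, hper u]
  calc ∫ φ in (0:ℝ)..2 * π, sin φ * g (θ - φ)
      = ∫ φ in (0:ℝ)..2 * π, (fun u => sin (θ - u) * g u) (θ - φ) := by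
        simp only [sub_sub_cancel]
    _ = ∫ u in (θ - 2 * π)..(θ - 0), sin (θ - u) * g u :=
        intervalIntegral.integral_comp_sub_left (fun u => sin (θ - u) * g u) θ
    _ = ∫ u in (0:ℝ)..2 * π, sin (θ - u) * g u := by
        simpa using hshift.intervalIntegral_add_eq (θ - 2 * π) 0
    _ = ∫ u in (0:ℝ)..2 * π, (sin θ * (cos u * g u) - cos θ * (sin u * g u)) :=
        intervalIntegral.integral_congr fun u _ => by simp only [sin_sub]; ring
    _ = _ := by
        rw [intervalIntegral.integral_sub, intervalIntegral.integral_const_mul,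
          intervalIntegral.integral_const_mul]
        all_goals exact (by fun_prop : Continuous _).intervalIntegrable _ _

theorem Jconv_q {K ω₀ r : ℝ} (hfix : r = psiMu ω₀ (2 * K * r)) (θ : ℝ) :
    Jconv K ω₀ (q K r) θ = -(K * r) * sin θ := by
  rw [Jconv, integral_sin_mul_comp_sub (continuous_q K r _) (q_periodic K r _),
    integral_sin_mul_comp_sub (continuous_q K r _) (q_periodic K r _), integral_sin_mul_q_neg]
  linear_combination (-(K / 2) * sin θ) * integral_cos_mul_q_add K r hfix

theorem Jconv_eq_of_odd {K ω₀ : ℝ} {h : ℝ → ℝ → ℝ}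
    (hcont_neg : Continuous fun θ => h θ (-ω₀)) (hcont : Continuous fun θ => h θ ω₀)
    (hper_neg : Function.Periodic (fun θ => h θ (-ω₀)) (2 * π))
    (hper : Function.Periodic (fun θ => h θ ω₀) (2 * π))
    (hodd : ∀ θ, h (-θ) (-ω₀) = -h θ ω₀) (θ : ℝ) :
    Jconv K ω₀ h θ = K * ellSin ω₀ h * cos θ := by
  have hcos : ∫ u in (0:ℝ)..2 * π, cos u * h u (-ω₀) = -∫ u in (0:ℝ)..2 * π, cos u * h u ω₀ := by
    have hsym := integral_comp_neg_of_periodic (f := fun u => cos u * h u (-ω₀))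
      (cos_periodic.mul hper_neg)
    simp only [cos_neg, hodd, mul_neg, intervalIntegral.integral_neg] at hsym
    exact hsym.symm
  rw [Jconv, integral_sin_mul_comp_sub hcont_neg hper_neg, integral_sin_mul_comp_sub hcont hper,
    hcos, ellSin]
  simp only [mul_comm (sin _)]
  ring

section Primitive

variable {k a : ℝ → ℝ}

theorem hasDerivAt_prim (ha : Continuous a) (θ : ℝ) : HasDerivAt (prim k a) (a θ) θ :=
  (ha.integral_hasStrictDerivAt 0 θ).hasDerivAt.sub_const _

theorem continuous_prim (ha : Continuous a) : Continuous (prim k a) :=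
  continuous_iff_continuousAt.mpr fun θ => (hasDerivAt_prim ha θ).continuousAt

theorem prim_two_pi (hmean : ∫ θ in (0:ℝ)..2 * π, a θ = 0) : prim k a (2 * π) = prim k a 0 := by
  simp only [prim, hmean, intervalIntegral.integral_same]

theorem exists_prim_eq_sub_const {F : ℝ → ℝ} (hF : ∀ θ, HasDerivAt F (a θ) θ)
    (ha : Continuous a) : ∃ c, ∀ θ, prim k a θ = F θ - c := by
  refine ⟨F 0 + (∫ s in (0:ℝ)..2 * π, (∫ u in (0:ℝ)..s, a u) / k s) /
    ∫ s in (0:ℝ)..2 * π, 1 / k s, fun θ => ?_⟩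
  rw [prim, intervalIntegral.integral_eq_sub_of_hasDerivAt (fun x _ => hF x)
    (ha.intervalIntegrable _ _)]
  ring

theorem integral_prim_div_eq_zero (ha : Continuous a) (hk : Continuous k)
    (hk_pos : ∀ θ, 0 < k θ) : ∫ θ in (0:ℝ)..2 * π, prim k a θ / k θ = 0 := by
  have hA : Continuous fun θ => (∫ u in (0:ℝ)..θ, a u) / k θ :=
    (intervalIntegral.continuous_primitive (fun _ _ => ha.intervalIntegrable _ _) 0).div hk
      fun θ => (hk_pos θ).ne'
  have hinv : Continuous fun θ => 1 / k θ := continuous_const.div hk fun θ => (hk_pos θ).ne'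
  have hinv_pos : 0 < ∫ θ in (0:ℝ)..2 * π, 1 / k θ :=
    intervalIntegral.intervalIntegral_pos_of_pos (hinv.intervalIntegrable _ _)
      (fun θ => one_div_pos.mpr (hk_pos θ)) two_pi_pos
  set c := (∫ s in (0:ℝ)..2 * π, (∫ u in (0:ℝ)..s, a u) / k s) / ∫ s in (0:ℝ)..2 * π, 1 / k s
  calc ∫ θ in (0:ℝ)..2 * π, prim k a θ / k θ
      = ∫ θ in (0:ℝ)..2 * π, ((∫ u in (0:ℝ)..θ, a u) / k θ - c * (1 / k θ)) :=
        intervalIntegral.integral_congr fun θ _ => by simp only [prim]; ring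
    _ = 0 := by
        rw [intervalIntegral.integral_sub (hA.intervalIntegrable _ _)
          ((hinv.intervalIntegrable _ _).const_mul c), intervalIntegral.integral_const_mul,
          div_mul_cancel₀ _ hinv_pos.ne', sub_self]

end Primitive

def flux (K r ω m : ℝ) (h : ℝ → ℝ → ℝ) (θ : ℝ) : ℝ :=
  (1 / 2) * deriv (fun u => h u ω) θ -
    (h θ ω * (ω - K * r * sin θ) + q K r θ ω * (m * cos θ))

section Flux

variable {K ω₀ r ω m : ℝ} {h : ℝ → ℝ → ℝ}

theorem hasDerivAt_flux (hfix : r = psiMu ω₀ (2 * K * r)) (hh : ContDiff ℝ 2 fun θ => h θ ω)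
    (hJ : ∀ θ, Jconv K ω₀ h θ = m * cos θ) (θ : ℝ) :
    HasDerivAt (flux K r ω m h) (Lop K ω₀ r h θ ω) θ := by
  have hdrift : (fun u => h u ω * (Jconv K ω₀ (q K r) u + ω) + q K r u ω * Jconv K ω₀ h u) =
      fun u => h u ω * (ω - K * r * sin u) + q K r u ω * (m * cos u) := by
    funext u
    rw [Jconv_q hfix, hJ]
    ring
  have hd1 : Differentiable ℝ fun θ => h θ ω := hh.differentiable (by norm_num)
  have hd2 : Differentiable ℝ (deriv fun θ => h θ ω) :=
    ((contDiff_succ_iff_deriv (n := 1)).mp hh).2.2.differentiable one_ne_zero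
  have hq : Differentiable ℝ fun θ => q K r θ ω := (contDiff_q K r ω).differentiable one_ne_zero
  have hdrift_diff : Differentiable ℝ
      fun u => h u ω * (ω - K * r * sin u) + q K r u ω * (m * cos u) := by
    fun_prop
  rw [Lop, hdrift]
  exact ((hd2 θ).hasDerivAt.const_mul (1 / 2)).sub (hdrift_diff θ).hasDerivAt

theorem contDiff_flux (hh : ContDiff ℝ 2 fun θ => h θ ω) : ContDiff ℝ 1 (flux K r ω m h) := by
  have hd : ContDiff ℝ 1 (deriv fun θ => h θ ω) := ((contDiff_succ_iff_deriv (n := 1)).mp hh).2.2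
  have hh1 : ContDiff ℝ 1 fun θ => h θ ω := hh.of_le (by norm_num)
  have hq := contDiff_q K r ω
  unfold flux
  fun_prop

theorem flux_div_q (hh : Differentiable ℝ fun θ => h θ ω) (θ : ℝ) :
    flux K r ω m h θ / q K r θ ω =
      (1 / 2) * deriv (fun u => h u ω / q K r u ω) θ +
        kap K r ω * h θ ω / q K r θ ω ^ 2 - m * cos θ := by
  have hq := (q_pos K r θ ω).ne'
  have hderiv : HasDerivAt (fun u => h u ω / q K r u ω)
      ((deriv (fun u => h u ω) θ * q K r θ ω -
        h θ ω * ((-(2 * K * r) * sin θ + 2 * ω) * q K r θ ω + 2 * kap K r ω)) /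
          q K r θ ω ^ 2) θ :=
    (hh θ).hasDerivAt.div (hasDerivAt_q K r θ ω) hq
  rw [hderiv.deriv, flux]
  field_simp
  ring

theorem exists_prim_Lop_eq_flux_sub_const (hfix : r = psiMu ω₀ (2 * K * r))
    (hh : ContDiff ℝ 2 fun θ => h θ ω) (hJ : ∀ θ, Jconv K ω₀ h θ = m * cos θ) :
    ∃ c, ∀ θ, prim (fun u => q K r u ω) (fun u => Lop K ω₀ r h u ω) θ = flux K r ω m h θ - c := by
  have hderiv : deriv (flux K r ω m h) = fun θ => Lop K ω₀ r h θ ω :=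
    funext fun θ => (hasDerivAt_flux hfix hh hJ θ).deriv
  exact exists_prim_eq_sub_const (hasDerivAt_flux hfix hh hJ)
    (hderiv ▸ (contDiff_flux hh).continuous_deriv le_rfl)

theorem integral_flux_div_q_mul_prim (hh : ContDiff ℝ 2 fun θ => h θ ω)
    (hh_per : Function.Periodic (fun θ => h θ ω) (2 * π)) {l : ℝ → ℝ → ℝ}
    (hl : Continuous fun θ => l θ ω) (hl_mean : ∫ θ in (0:ℝ)..2 * π, l θ ω = 0) :
    ∫ θ in (0:ℝ)..2 * π,
        flux K r ω m h θ / q K r θ ω * prim (fun u => q K r u ω) (fun u => l u ω) θ =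
      -(1 / 2) * (∫ θ in (0:ℝ)..2 * π, h θ ω * l θ ω / q K r θ ω) +
        (∫ θ in (0:ℝ)..2 * π,
          kap K r ω * h θ ω * prim (fun u => q K r u ω) (fun u => l u ω) θ / q K r θ ω ^ 2) +
        m * ∫ θ in (0:ℝ)..2 * π, l θ ω * sin θ := by
  set Λ := prim (fun u => q K r u ω) (fun u => l u ω)
  have hq := contDiff_q K r ω
  have hq_ne : ∀ θ, q K r θ ω ≠ 0 := fun θ => (q_pos K r θ ω).ne'
  have hh1 : ContDiff ℝ 1 fun θ => h θ ω := hh.of_le (by norm_num)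
  have hhq : ContDiff ℝ 1 fun θ => h θ ω / q K r θ ω := hh1.div hq hq_ne
  have hΛ : ∀ θ, HasDerivAt Λ (l θ ω) θ := hasDerivAt_prim hl
  have hΛ_cont : Continuous Λ := continuous_prim hl
  have hΛ_per : Λ (2 * π) = Λ 0 := prim_two_pi hl_mean
  have hhq_per : h (2 * π) ω / q K r (2 * π) ω = h 0 ω / q K r 0 ω := by
    simpa using (hh_per.div (q_periodic K r ω)) 0
  have ibp_hq := integral_mul_deriv_eq_neg_deriv_mul_of_boundary hΛ
    (fun θ => (hhq.differentiable one_ne_zero θ).hasDerivAt) hl (hhq.continuous_deriv le_rfl)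
    hΛ_per hhq_per
  have ibp_sin := integral_mul_deriv_eq_neg_deriv_mul_of_boundary hΛ hasDerivAt_sin hl
    continuous_cos hΛ_per (by simp)
  have hcont₁ : Continuous fun θ => Λ θ * deriv (fun u => h u ω / q K r u ω) θ :=
    hΛ_cont.mul (hhq.continuous_deriv le_rfl)
  have hcont₂ : Continuous fun θ => kap K r ω * h θ ω * Λ θ / q K r θ ω ^ 2 :=
    ((continuous_const.mul hh1.continuous).mul hΛ_cont).div (hq.continuous.pow 2)
      fun θ => pow_ne_zero 2 (hq_ne θ)
  have hhl : ∫ θ in (0:ℝ)..2 * π, l θ ω * (h θ ω / q K r θ ω) =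
      ∫ θ in (0:ℝ)..2 * π, h θ ω * l θ ω / q K r θ ω :=
    intervalIntegral.integral_congr fun θ _ => by ring
  have hsplit : ∀ θ, flux K r ω m h θ / q K r θ ω * Λ θ =
      (1 / 2) * (Λ θ * deriv (fun u => h u ω / q K r u ω) θ) +
        kap K r ω * h θ ω * Λ θ / q K r θ ω ^ 2 - m * (Λ θ * cos θ) := fun θ => by
    rw [flux_div_q (hh1.differentiable one_ne_zero)]
    ring
  rw [intervalIntegral.integral_congr fun θ _ => hsplit θ,
    intervalIntegral.integral_sub, intervalIntegral.integral_add,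
    intervalIntegral.integral_const_mul, intervalIntegral.integral_const_mul, ibp_hq, ibp_sin, hhl]
  · ring
  all_goals exact Continuous.intervalIntegrable (by fun_prop) _ _

theorem integral_prim_Lop_mul_prim (hfix : r = psiMu ω₀ (2 * K * r))
    (hh : ContDiff ℝ 2 fun θ => h θ ω) (hh_per : Function.Periodic (fun θ => h θ ω) (2 * π))
    (hJ : ∀ θ, Jconv K ω₀ h θ = m * cos θ) {l : ℝ → ℝ → ℝ} (hl : Continuous fun θ => l θ ω)
    (hl_mean : ∫ θ in (0:ℝ)..2 * π, l θ ω = 0) :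
    ∫ θ in (0:ℝ)..2 * π, prim (fun u => q K r u ω) (fun u => Lop K ω₀ r h u ω) θ *
        prim (fun u => q K r u ω) (fun u => l u ω) θ / q K r θ ω =
      -(1 / 2) * (∫ θ in (0:ℝ)..2 * π, h θ ω * l θ ω / q K r θ ω) +
        (∫ θ in (0:ℝ)..2 * π,
          kap K r ω * h θ ω * prim (fun u => q K r u ω) (fun u => l u ω) θ / q K r θ ω ^ 2) +
        m * ∫ θ in (0:ℝ)..2 * π, l θ ω * sin θ := by
  set Λ := prim (fun u => q K r u ω) (fun u => l u ω)
  obtain ⟨c, hc⟩ := exists_prim_Lop_eq_flux_sub_const hfix hh hJ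
  have hΛ_cont : Continuous Λ := continuous_prim hl
  have hq_ne : ∀ θ, q K r θ ω ≠ 0 := fun θ => (q_pos K r θ ω).ne'
  have hflux : Continuous fun θ => flux K r ω m h θ / q K r θ ω * Λ θ :=
    (((contDiff_flux hh).continuous.div (continuous_q K r ω) hq_ne)).mul hΛ_cont
  have hΛ_div_q : Continuous fun θ => Λ θ / q K r θ ω := hΛ_cont.div (continuous_q K r ω) hq_ne
  have hsplit : ∀ θ, prim (fun u => q K r u ω) (fun u => Lop K ω₀ r h u ω) θ * Λ θ / q K r θ ω =
      flux K r ω m h θ / q K r θ ω * Λ θ - c * (Λ θ / q K r θ ω) := fun θ => by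
    rw [hc]
    ring
  rw [intervalIntegral.integral_congr fun θ _ => hsplit θ,
    intervalIntegral.integral_sub (hflux.intervalIntegrable _ _)
      ((hΛ_div_q.intervalIntegrable _ _).const_mul c), intervalIntegral.integral_const_mul,
    integral_prim_div_eq_zero hl (continuous_q K r ω) (q_pos K r · ω), mul_zero, sub_zero,
    integral_flux_div_q_mul_prim hh hh_per hl hl_mean]

end Flux

theorem stmt9_general (K ω₀ r : ℝ)
    (hfix : r = psiMu ω₀ (2 * K * r)) (h l : ℝ → ℝ → ℝ)
    (hper : ∀ ω ∈ ({-ω₀, ω₀} : Set ℝ), Function.Periodic (fun θ => h θ ω) (2 * Real.pi))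
    (hsm : ∀ ω ∈ ({-ω₀, ω₀} : Set ℝ), ContDiff ℝ (⊤ : ℕ∞) (fun θ => h θ ω))
    (hodd : ∀ θ : ℝ, ∀ ω ∈ ({-ω₀, ω₀} : Set ℝ), h (-θ) (-ω) = -h θ ω)
    (lsm : ∀ ω ∈ ({-ω₀, ω₀} : Set ℝ), ContDiff ℝ (⊤ : ℕ∞) (fun θ => l θ ω))
    (lmean : ∀ ω ∈ ({-ω₀, ω₀} : Set ℝ), (∫ θ in (0:ℝ)..(2 * Real.pi), l θ ω) = 0) :
    pairMu K r ω₀ (fun θ ω => Lop K ω₀ r h θ ω) l =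
      Gam K r ω₀ h l + K * ellSin ω₀ h * ellSin ω₀ l := by
  have hneg : -ω₀ ∈ ({-ω₀, ω₀} : Set ℝ) := mem_insert _ _
  have hpos : ω₀ ∈ ({-ω₀, ω₀} : Set ℝ) := mem_insert_of_mem _ rfl
  have hJ : ∀ θ, Jconv K ω₀ h θ = K * ellSin ω₀ h * cos θ :=
    Jconv_eq_of_odd (hsm _ hneg).continuous (hsm _ hpos).continuous (hper _ hneg) (hper _ hpos)
      fun θ => hodd θ ω₀ hpos
  rw [pairMu,
    integral_prim_Lop_mul_prim hfix (contDiff_infty.mp (hsm _ hneg) 2) (hper _ hneg) hJ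
      (lsm _ hneg).continuous (lmean _ hneg),
    integral_prim_Lop_mul_prim hfix (contDiff_infty.mp (hsm _ hpos) 2) (hper _ hpos) hJ
      (lsm _ hpos).continuous (lmean _ hpos), Gam, ellSin, ellSin]
  ring

/-- Decomposition of the Dirichlet form of the linearized operator. -/
theorem stmt9 (K ω₀ r : ℝ) (hK : 0 < K) (hω₀ : 0 < ω₀) (hr : 0 < r)
    (hfix : r = psiMu ω₀ (2 * K * r)) (h l : ℝ → ℝ → ℝ)
    (hper : ∀ ω ∈ ({-ω₀, ω₀} : Set ℝ), Function.Periodic (fun θ => h θ ω) (2 * Real.pi))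
    (hsm : ∀ ω ∈ ({-ω₀, ω₀} : Set ℝ), ContDiff ℝ (⊤ : ℕ∞) (fun θ => h θ ω))
    (hodd : ∀ θ : ℝ, ∀ ω ∈ ({-ω₀, ω₀} : Set ℝ), h (-θ) (-ω) = -h θ ω)
    (hmean : ∀ ω ∈ ({-ω₀, ω₀} : Set ℝ), (∫ θ in (0:ℝ)..(2 * Real.pi), h θ ω) = 0)
    (lper : ∀ ω ∈ ({-ω₀, ω₀} : Set ℝ), Function.Periodic (fun θ => l θ ω) (2 * Real.pi))
    (lsm : ∀ ω ∈ ({-ω₀, ω₀} : Set ℝ), ContDiff ℝ (⊤ : ℕ∞) (fun θ => l θ ω))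
    (lodd : ∀ θ : ℝ, ∀ ω ∈ ({-ω₀, ω₀} : Set ℝ), l (-θ) (-ω) = -l θ ω)
    (lmean : ∀ ω ∈ ({-ω₀, ω₀} : Set ℝ), (∫ θ in (0:ℝ)..(2 * Real.pi), l θ ω) = 0) :
    pairMu K r ω₀ (fun θ ω => Lop K ω₀ r h θ ω) l =
      Gam K r ω₀ h l + K * ellSin ω₀ h * ellSin ω₀ l :=
  stmt9_general K ω₀ r hfix h l hper hsm hodd lsm lmean
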